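/- arXiv:1303.4102 — 3 statements merged into one kernel-verified Lean document; each statement's English description precedes it below -/
import Mathlib

section
/- For every integer r ≥ 1 and either choice of sign, (S^±)^r = q^{± r(r−1)/2} [r]! Σ_{1 ≤ i₁ < i₂ < ⋯ < i_r ≤ n} S^±_{i₁} S^±_{i₂} ⋯ S^±_{i_r} as endomorphisms of V = (ℂ²)^{⊗n} (when r > n the sum is empty and both sides vanish). -/
open Matrix Filter Topology BigOperators Finset

noncomputable section

/-- Spin configurations: basis labels of `(ℂ²)^{⊗n}`; `0` is `+`, `1` is `−`. -/
abbrev Spins (n : ℕ) := Fin n → Fin 2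

/-- σ⁺ = [[0,1],[0,0]] -/
def sigmaP : Matrix (Fin 2) (Fin 2) ℂ := fun a b => if a = 0 ∧ b = 1 then 1 else 0

/-- σ⁻ = [[0,0],[1,0]] -/
def sigmaM : Matrix (Fin 2) (Fin 2) ℂ := fun a b => if a = 1 ∧ b = 0 then 1 else 0

/-- diagonal entry of K = diag(v, v⁻¹) -/
def Kdiag (v : ℂ) (a : Fin 2) : ℂ := if a = 0 then v else v⁻¹

/-- `S_i^A = K^{⊗(i−1)} ⊗ A ⊗ (K⁻¹)^{⊗(n−i)}` as a matrix on `(ℂ²)^{⊗n}`. -/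
def siteOp (n : ℕ) (v : ℂ) (A : Matrix (Fin 2) (Fin 2) ℂ) (i : Fin n) :
    Matrix (Spins n) (Spins n) ℂ :=
  fun x y => ∏ k : Fin n,
    if k < i then (if x k = y k then Kdiag v (x k) else 0)
    else if k = i then A (x k) (y k)
    else (if x k = y k then Kdiag v⁻¹ (x k) else 0)

/-- `S^+ = Σ_i S_i^+`. -/
def SpOp (n : ℕ) (v : ℂ) : Matrix (Spins n) (Spins n) ℂ := ∑ i : Fin n, siteOp n v sigmaP i

/-- `S^- = Σ_i S_i^-`. -/
def SmOp (n : ℕ) (v : ℂ) : Matrix (Spins n) (Spins n) ℂ := ∑ i : Fin n, siteOp n v sigmaM i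

/-- `Σ^z = Σ_i 1 ⊗ ⋯ ⊗ σ^z ⊗ ⋯ ⊗ 1` (diagonal). -/
def SzOp (n : ℕ) : Matrix (Spins n) (Spins n) ℂ :=
  fun x y => if x = y then ∑ k : Fin n, (if x k = 0 then (1 : ℂ) else -1) else 0

/-- symmetric q-number `[k] = (q^k − q^{−k})/(q − q⁻¹)`. -/
def qNum (q : ℂ) (k : ℤ) : ℂ := (q ^ k - q ^ (-k)) / (q - q⁻¹)

/-- q-factorial `[k]! = [k][k−1]⋯[1]`, `[0]! = 1`. -/
def qFact (q : ℂ) : ℕ → ℂ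
  | 0 => 1
  | k + 1 => qNum q (k + 1) * qFact q k

/-- q-binomial `[k choose l]`, zero unless `0 ≤ l ≤ k`. -/
def qBinom (q : ℂ) (k l : ℤ) : ℂ :=
  if 0 ≤ l ∧ l ≤ k then qFact q k.toNat / (qFact q l.toNat * qFact q (k - l).toNat) else 0

/-- `q` is generic: nonzero and not a root of unity. -/
def Generic (q : ℂ) : Prop := q ≠ 0 ∧ ∀ k : ℕ, 0 < k → q ^ k ≠ 1

def GenericSet : Set ℂ := {q | Generic q}

/-- the root of unity `q` is associated with `p`: `p ≥ 2` is minimal with `q^{2p} = 1`. -/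
def AssocRootOfUnity (q : ℂ) (p : ℕ) : Prop :=
  2 ≤ p ∧ q ^ (2 * p) = 1 ∧ ∀ k : ℕ, 0 < k → k < p → q ^ (2 * k) ≠ 1

/-- the coefficient `a_{i,j,m}` of the paper, with `k = j − m` and `s = j + m`:
`a = (−1)^{i+k} [i choose k] [i+s+1 choose i+1]⁻¹ [k+s+1] / [i+1]`. -/
def aCoeff (q : ℂ) (i k s : ℤ) : ℂ :=
  (-1 : ℂ) ^ (i + k) * qBinom q i k * (qBinom q (i + s + 1) (i + 1))⁻¹ *
    qNum q (k + s + 1) / qNum q (i + 1)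

/-- `S_r = (S^−)^r (S^+)^r / ([r]!)²` with `q = v²`. -/
def SOp (n : ℕ) (v : ℂ) (r : ℕ) : Matrix (Spins n) (Spins n) ℂ :=
  ((qFact (v ^ 2) r) ^ 2)⁻¹ • (SmOp n v ^ r * SpOp n v ^ r)

/-- a function of `q` is regular at `q_c` if it has a finite limit as `q → q_c`
through generic values of `q`. -/
def RegularAt (f : ℂ → ℂ) (qc : ℂ) : Prop :=
  ∃ L : ℂ, Tendsto f (𝓝[GenericSet] qc) (𝓝 L)


/-- the ordered product `S^A_{i₁} S^A_{i₂} ⋯ S^A_{i_r}` over the elements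
`i₁ < i₂ < ⋯ < i_r` of a finite set of sites. -/
def orderedProd (n : ℕ) (v : ℂ) (A : Matrix (Fin 2) (Fin 2) ℂ) (s : Finset (Fin n)) :
    Matrix (Spins n) (Spins n) ℂ :=
  ((s.sort (· ≤ ·)).map (fun i => siteOp n v A i)).prod

/-!
For `i < j` the site operators `q`-commute, `S_j S_i = c • S_i S_j`, because conjugation by `K`
rescales `σ^±` by `q^{±1}` and this happens once at site `i` and once at site `j`; so `c = q^{±2}`.
Moreover `(S_i)² = 0`. Hence left multiplication of the ordered product over `s` by `S_i` is zero
for `i ∈ s`, and for `i ∉ s` it is the ordered product over `insert i s` times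
`c ^ #{j ∈ s | j < i}`. Expanding `(Σ_i S_i)^r` one factor at a time, every ordered product over
an `r`-set therefore appears with coefficient `∏_{k<r} (1 + c + ⋯ + c^k)`, and
`1 + q² + ⋯ + q^{2k} = q^k [k+1]` turns this into `q^{±r(r-1)/2} [r]!`.
-/

lemma sum_powersetCard_sum_compl_insert {α M : Type*} [Fintype α] [DecidableEq α]
    [AddCommMonoid M] (r : ℕ) (f : Finset α → α → M) :
    ∑ s ∈ powersetCard r univ, ∑ i ∈ sᶜ, f (insert i s) i =
      ∑ t ∈ powersetCard (r + 1) univ, ∑ i ∈ t, f t i := by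
  rw [sum_sigma', sum_sigma']
  refine sum_nbij' (fun p => ⟨insert p.2 p.1, p.2⟩) (fun p => ⟨p.1.erase p.2, p.2⟩)
    ?_ ?_ ?_ ?_ fun _ _ => rfl
  · rintro ⟨s, i⟩ hp
    simp_all [card_insert_of_notMem]
  · rintro ⟨t, i⟩ hp
    simp_all [card_erase_of_mem]
  · rintro ⟨s, i⟩ hp
    simp_all
  · rintro ⟨t, i⟩ hp
    simp_all

lemma sum_pow_card_filter_lt {ι K : Type*} [LinearOrder ι] [CommSemiring K] (c : K)
    (t : Finset ι) : ∑ i ∈ t, c ^ #{j ∈ t | j < i} = ∑ m ∈ range #t, c ^ m := by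
  induction t using induction_on_max with
  | empty => simp
  | insert a t hta ih =>
    have hat : a ∉ t := fun h => lt_irrefl a (hta a h)
    have hfilter : ∀ i ∈ t, {j ∈ insert a t | j < i} = {j ∈ t | j < i} := fun i hi => by
      rw [filter_insert, if_neg (hta i hi).not_gt]
    rw [sum_insert hat, filter_insert, if_neg (lt_irrefl a), filter_true_of_mem hta,
      sum_congr rfl fun i hi => by rw [hfilter i hi], ih, card_insert_of_notMem hat,
      sum_range_succ, add_comm]

def gaussFactorial {K : Type*} [CommSemiring K] (c : K) (r : ℕ) : K :=
  ∏ k ∈ range r, ∑ m ∈ range (k + 1), c ^ m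

lemma gaussFactorial_succ {K : Type*} [CommSemiring K] (c : K) (r : ℕ) :
    gaussFactorial c (r + 1) = gaussFactorial c r * ∑ m ∈ range (r + 1), c ^ m :=
  prod_range_succ _ r

section SortedProd

variable {ι R K : Type*} [LinearOrder ι]

def sortedProd [Monoid R] (x : ι → R) (s : Finset ι) : R := ((s.sort (· ≤ ·)).map x).prod

@[simp]
lemma sortedProd_empty [Monoid R] (x : ι → R) : sortedProd x ∅ = 1 := by
  simp [sortedProd]

lemma sortedProd_insert_of_forall_lt [Monoid R] (x : ι → R) {a : ι} {s : Finset ι}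
    (h : ∀ b ∈ s, a < b) : sortedProd x (insert a s) = x a * sortedProd x s := by
  rw [sortedProd, sort_insert _ (fun b hb => (h b hb).le) fun ha => lt_irrefl a (h a ha),
    List.map_cons, List.prod_cons, sortedProd]

variable [Semiring R] [CommSemiring K] [Algebra K R] {x : ι → R} {c : K}

lemma mul_sortedProd_of_mem (hsq : ∀ i, x i * x i = 0)
    (hcomm : ∀ i j, i < j → x j * x i = c • (x i * x j)) {i : ι} {s : Finset ι} (hi : i ∈ s) :
    x i * sortedProd x s = 0 := by
  induction s using induction_on_min with
  | empty => simp at hi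
  | insert a t hat ih =>
    rw [sortedProd_insert_of_forall_lt x hat, ← mul_assoc]
    obtain rfl | hit := mem_insert.mp hi
    · rw [hsq, zero_mul]
    · rw [hcomm a i (hat i hit), smul_mul_assoc, mul_assoc, ih hit, mul_zero, smul_zero]

lemma mul_sortedProd_of_notMem (hcomm : ∀ i j, i < j → x j * x i = c • (x i * x j))
    {i : ι} {s : Finset ι} (hi : i ∉ s) :
    x i * sortedProd x s = c ^ #{j ∈ s | j < i} • sortedProd x (insert i s) := by
  induction s using induction_on_min with
  | empty => simp [sortedProd]
  | insert a t hat ih =>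
    obtain ⟨hia, hit⟩ : i ≠ a ∧ i ∉ t := by simpa using hi
    rcases hia.lt_or_gt with hia | hai
    · have hlt : ∀ b ∈ insert a t, i < b := by
        simpa [hia] using fun b hb => hia.trans (hat b hb)
      rw [filter_false_of_mem fun b hb => (hlt b hb).not_gt, card_empty, pow_zero,
        one_smul, sortedProd_insert_of_forall_lt x hlt]
    · have hlt : ∀ b ∈ insert i t, a < b := by simpa [hai] using hat
      rw [sortedProd_insert_of_forall_lt x hat, ← mul_assoc, hcomm a i hai, smul_mul_assoc,
        mul_assoc, ih hit, mul_smul_comm, smul_smul, insert_comm,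
        sortedProd_insert_of_forall_lt x hlt, filter_insert, if_pos hai,
        card_insert_of_notMem (by simp [(hat a).mt (lt_irrefl a)]), pow_succ']

theorem sum_pow_eq_gaussFactorial_smul_sum_sortedProd [Fintype ι] (hsq : ∀ i, x i * x i = 0)
    (hcomm : ∀ i j, i < j → x j * x i = c • (x i * x j)) (r : ℕ) :
    (∑ i, x i) ^ r = gaussFactorial c r • ∑ s ∈ powersetCard r univ, sortedProd x s := by
  induction r with
  | zero => simp [gaussFactorial]
  | succ r ih =>
    have hstep : ∀ s ∈ powersetCard r univ, (∑ i, x i) * sortedProd x s =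
        ∑ i ∈ sᶜ, c ^ #{j ∈ insert i s | j < i} • sortedProd x (insert i s) := fun s _ => by
      rw [sum_mul, ← sum_compl_add_sum s,
        sum_eq_zero fun i hi => mul_sortedProd_of_mem hsq hcomm hi, add_zero]
      refine sum_congr rfl fun i hi => ?_
      rw [mul_sortedProd_of_notMem hcomm (mem_compl.mp hi), filter_insert, if_neg (lt_irrefl i)]
    calc (∑ i, x i) ^ (r + 1)
        = gaussFactorial c r • ∑ s ∈ powersetCard r univ, (∑ i, x i) * sortedProd x s := by
          rw [pow_succ', ih, mul_smul_comm, mul_sum]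
      _ = gaussFactorial c r • ∑ t ∈ powersetCard (r + 1) univ,
            ∑ i ∈ t, c ^ #{j ∈ t | j < i} • sortedProd x t := by
          rw [sum_congr rfl hstep,
            sum_powersetCard_sum_compl_insert r fun t i => c ^ #{j ∈ t | j < i} • sortedProd x t]
      _ = gaussFactorial c (r + 1) • ∑ t ∈ powersetCard (r + 1) univ, sortedProd x t := by
          rw [gaussFactorial_succ, mul_smul]
          congr 1
          rw [smul_sum]
          refine sum_congr rfl fun t ht => ?_
          rw [← Finset.sum_smul, sum_pow_card_filter_lt, mem_powersetCard_univ.mp ht]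

end SortedProd

section PiKronecker

variable {ι α R : Type*} [Fintype ι] [CommSemiring R]

def piKronecker (m : ι → Matrix α α R) : Matrix (ι → α) (ι → α) R :=
  Matrix.of fun x y => ∏ k, m k (x k) (y k)

@[simp]
lemma piKronecker_apply (m : ι → Matrix α α R) (x y : ι → α) :
    piKronecker m x y = ∏ k, m k (x k) (y k) := rfl

lemma piKronecker_mul [DecidableEq ι] [Fintype α] (m m' : ι → Matrix α α R) :
    piKronecker m * piKronecker m' = piKronecker fun k => m k * m' k := by
  ext x y
  simp only [mul_apply, piKronecker_apply, prod_univ_sum, Fintype.piFinset_univ,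
    prod_mul_distrib]

lemma piKronecker_eq_zero {m : ι → Matrix α α R} {i : ι} (h : m i = 0) : piKronecker m = 0 := by
  ext x y
  exact prod_eq_zero (mem_univ i) (by simp [h])

lemma piKronecker_eq_prod_smul {m m' : ι → Matrix α α R} {c : ι → R}
    (h : ∀ k, m k = c k • m' k) : piKronecker m = (∏ k, c k) • piKronecker m' := by
  ext x y
  simp [h, prod_mul_distrib]

end PiKronecker

section SiteFactor

variable {ι α R : Type*} [LinearOrder ι] [CommSemiring R]

def siteFactor (D A E : Matrix α α R) (i k : ι) : Matrix α α R :=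
  if k < i then D else if k = i then A else E

variable [Fintype α] {D A E : Matrix α α R} {w : R}

lemma siteFactor_mul_siteFactor_of_lt (hDE : D * E = E * D) (hDA : D * A = w • (A * D))
    (hAE : A * E = w • (E * A)) {i j : ι} (hij : i < j) (k : ι) :
    siteFactor D A E j k * siteFactor D A E i k =
      (if k = i ∨ k = j then w else 1) • (siteFactor D A E i k * siteFactor D A E j k) := by
  unfold siteFactor
  rcases lt_trichotomy k i with hki | rfl | hik
  · simp [hki, hki.trans hij, hki.ne, (hki.trans hij).ne]
  · simp [hij, hij.ne, hDA]
  · rcases lt_trichotomy k j with hkj | rfl | hjk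
    · simp [hik.not_gt, hik.ne', hkj, hkj.ne, hDE]
    · simp [hik.not_gt, hik.ne', hAE]
    · simp [hik.not_gt, hik.ne', hjk.not_gt, hjk.ne']

variable [Fintype ι]

lemma piKronecker_siteFactor_mul_of_lt (hDE : D * E = E * D) (hDA : D * A = w • (A * D))
    (hAE : A * E = w • (E * A)) {i j : ι} (hij : i < j) :
    piKronecker (siteFactor D A E j) * piKronecker (siteFactor D A E i) =
      w ^ 2 • (piKronecker (siteFactor D A E i) * piKronecker (siteFactor D A E j)) := by
  rw [piKronecker_mul, piKronecker_mul,
    piKronecker_eq_prod_smul (siteFactor_mul_siteFactor_of_lt hDE hDA hAE hij)]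
  congr 1
  rw [prod_ite, prod_const_one, mul_one, prod_const, filter_or, filter_eq', filter_eq',
    if_pos (mem_univ _), if_pos (mem_univ _), ← insert_eq, card_pair hij.ne]

lemma piKronecker_siteFactor_mul_self (hA : A * A = 0) (i : ι) :
    piKronecker (siteFactor D A E i) * piKronecker (siteFactor D A E i) = 0 := by
  rw [piKronecker_mul]
  exact piKronecker_eq_zero (i := i) (by simp [siteFactor, hA])

end SiteFactor

lemma siteOp_eq_piKronecker (n : ℕ) (v : ℂ) (A : Matrix (Fin 2) (Fin 2) ℂ) (i : Fin n) :
    siteOp n v A i =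
      piKronecker (siteFactor (diagonal (Kdiag v)) A (diagonal (Kdiag v⁻¹)) i) := by
  ext x y
  refine prod_congr rfl fun k _ => ?_
  unfold siteFactor
  split_ifs <;> simp [*]

lemma orderedProd_eq_sortedProd (n : ℕ) (v : ℂ) (A : Matrix (Fin 2) (Fin 2) ℂ) :
    orderedProd n v A = sortedProd (siteOp n v A) := rfl

lemma diagonal_Kdiag_comm (v : ℂ) :
    diagonal (Kdiag v) * diagonal (Kdiag v⁻¹) = diagonal (Kdiag v⁻¹) * diagonal (Kdiag v) := by
  simp only [diagonal_mul_diagonal, mul_comm]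

lemma siteOp_mul_self {n : ℕ} {v : ℂ} {A : Matrix (Fin 2) (Fin 2) ℂ} (hA : A * A = 0)
    (i : Fin n) : siteOp n v A i * siteOp n v A i = 0 := by
  rw [siteOp_eq_piKronecker]
  exact piKronecker_siteFactor_mul_self hA i

lemma siteOp_mul_siteOp_of_lt {n : ℕ} {v w : ℂ} {A : Matrix (Fin 2) (Fin 2) ℂ}
    (hKA : diagonal (Kdiag v) * A = w • (A * diagonal (Kdiag v)))
    (hAK : A * diagonal (Kdiag v⁻¹) = w • (diagonal (Kdiag v⁻¹) * A)) {i j : Fin n}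
    (hij : i < j) :
    siteOp n v A j * siteOp n v A i = w ^ 2 • (siteOp n v A i * siteOp n v A j) := by
  simp only [siteOp_eq_piKronecker]
  exact piKronecker_siteFactor_mul_of_lt (diagonal_Kdiag_comm v) hKA hAK hij

lemma sigmaP_mul_self : sigmaP * sigmaP = 0 := by
  ext a b
  fin_cases a <;> fin_cases b <;> simp [sigmaP, mul_apply]

lemma sigmaM_mul_self : sigmaM * sigmaM = 0 := by
  ext a b
  fin_cases a <;> fin_cases b <;> simp [sigmaM, mul_apply]

lemma diagonal_Kdiag_mul_sigmaP {v : ℂ} (hv : v ≠ 0) :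
    diagonal (Kdiag v) * sigmaP = v ^ 2 • (sigmaP * diagonal (Kdiag v)) := by
  ext a b
  fin_cases a <;> fin_cases b <;> simp [sigmaP, Kdiag]
  field_simp

lemma sigmaP_mul_diagonal_Kdiag_inv {v : ℂ} (hv : v ≠ 0) :
    sigmaP * diagonal (Kdiag v⁻¹) = v ^ 2 • (diagonal (Kdiag v⁻¹) * sigmaP) := by
  ext a b
  fin_cases a <;> fin_cases b <;> simp [sigmaP, Kdiag]
  field_simp

lemma diagonal_Kdiag_mul_sigmaM {v : ℂ} (hv : v ≠ 0) :
    diagonal (Kdiag v) * sigmaM = (v ^ 2)⁻¹ • (sigmaM * diagonal (Kdiag v)) := by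
  ext a b
  fin_cases a <;> fin_cases b <;> simp [sigmaM, Kdiag]
  field_simp

lemma sigmaM_mul_diagonal_Kdiag_inv {v : ℂ} (hv : v ≠ 0) :
    sigmaM * diagonal (Kdiag v⁻¹) = (v ^ 2)⁻¹ • (diagonal (Kdiag v⁻¹) * sigmaM) := by
  ext a b
  fin_cases a <;> fin_cases b <;> simp [sigmaM, Kdiag]
  field_simp

lemma qNum_inv (q : ℂ) (k : ℤ) : qNum q⁻¹ k = qNum q k := by
  rw [qNum, qNum, inv_inv, _root_.inv_zpow', _root_.inv_zpow', neg_neg, ← neg_sub, ← neg_sub q,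
    neg_div_neg_eq]

lemma qFact_inv (q : ℂ) (r : ℕ) : qFact q⁻¹ r = qFact q r := by
  induction r with
  | zero => rfl
  | succ r ih => rw [qFact, qFact, qNum_inv, ih]

lemma qFact_eq_prod (q : ℂ) (r : ℕ) : qFact q r = ∏ k ∈ range r, qNum q (k + 1) := by
  induction r with
  | zero => rfl
  | succ r ih => rw [qFact, ih, prod_range_succ, mul_comm]

lemma geom_sum_sq_eq_pow_mul_qNum {u : ℂ} (hu : u ≠ 0) (hu2 : u ^ 2 ≠ 1) (k : ℕ) :
    ∑ m ∈ range (k + 1), (u ^ 2) ^ m = u ^ k * qNum u (k + 1) := by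
  have hsub : u - u⁻¹ ≠ 0 := by
    rw [sub_ne_zero]
    contrapose! hu2
    field_simp at hu2
    rw [hu2]
  rw [geom_sum_eq hu2, qNum, _root_.zpow_neg, ← Nat.cast_add_one, zpow_natCast]
  field_simp
  ring

lemma gaussFactorial_sq_eq {u : ℂ} (hu : u ≠ 0) (hu2 : u ^ 2 ≠ 1) (r : ℕ) :
    gaussFactorial (u ^ 2) r = u ^ (r * (r - 1) / 2) * qFact u r := by
  rw [gaussFactorial, prod_congr rfl fun k _ => geom_sum_sq_eq_pow_mul_qNum hu hu2 k,
    prod_mul_distrib, prod_pow_eq_pow_sum, sum_range_id, qFact_eq_prod]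

theorem stmt1_general (n : ℕ) (v : ℂ) (hv : v ≠ 0) (hq : (v ^ 2) ^ 2 ≠ 1)
    (r : ℕ) :
    SpOp n v ^ r = ((v ^ 2) ^ (r * (r - 1) / 2) * qFact (v ^ 2) r) •
      ∑ s ∈ Finset.powersetCard r (Finset.univ : Finset (Fin n)), orderedProd n v sigmaP s ∧
    SmOp n v ^ r = (((v ^ 2) ^ (r * (r - 1) / 2))⁻¹ * qFact (v ^ 2) r) •
      ∑ s ∈ Finset.powersetCard r (Finset.univ : Finset (Fin n)), orderedProd n v sigmaM s := by
  have hq0 : v ^ 2 ≠ 0 := pow_ne_zero 2 hv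
  have hq' : ((v ^ 2)⁻¹) ^ 2 ≠ 1 := by rwa [inv_pow, inv_ne_one]
  constructor
  · rw [SpOp, orderedProd_eq_sortedProd, ← gaussFactorial_sq_eq hq0 hq,
      sum_pow_eq_gaussFactorial_smul_sum_sortedProd (siteOp_mul_self sigmaP_mul_self)
        fun i j => siteOp_mul_siteOp_of_lt (diagonal_Kdiag_mul_sigmaP hv)
          (sigmaP_mul_diagonal_Kdiag_inv hv)]
  · rw [SmOp, orderedProd_eq_sortedProd, ← inv_pow, ← qFact_inv,
      ← gaussFactorial_sq_eq (inv_ne_zero hq0) hq',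
      sum_pow_eq_gaussFactorial_smul_sum_sortedProd (siteOp_mul_self sigmaM_mul_self)
        fun i j => siteOp_mul_siteOp_of_lt (diagonal_Kdiag_mul_sigmaM hv)
          (sigmaM_mul_diagonal_Kdiag_inv hv)]

/-- `(S^±)^r = q^{±r(r−1)/2} [r]! Σ_{i₁<⋯<i_r} S^±_{i₁} ⋯ S^±_{i_r}`, `q = v²`. -/
theorem stmt1 (n : ℕ) (hn : 1 ≤ n) (v : ℂ) (hv : v ≠ 0) (hq : (v ^ 2) ^ 2 ≠ 1)
    (r : ℕ) (hr : 1 ≤ r) :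
    SpOp n v ^ r = ((v ^ 2) ^ (r * (r - 1) / 2) * qFact (v ^ 2) r) •
      ∑ s ∈ Finset.powersetCard r (Finset.univ : Finset (Fin n)), orderedProd n v sigmaP s ∧
    SmOp n v ^ r = (((v ^ 2) ^ (r * (r - 1) / 2))⁻¹ * qFact (v ^ 2) r) •
      ∑ s ∈ Finset.powersetCard r (Finset.univ : Finset (Fin n)), orderedProd n v sigmaM s :=
  stmt1_general n v hv hq r

end
end

section
/- Assume q = v² is generic and define S_r = (S^−)^r (S^+)^r / ([r]!)² ∈ End(V) for r ≥ 0. Let k, l be integers with 0 ≤ k ≤ l and let m ≥ 0 be a half-integer (2m ∈ ℤ). Then for every u in the weight space W_m one has S_k S_l u = Σ_{i=0}^{k} [l+i choose k] [l+i choose l] [2m+k+l choose k−i] S_{l+i} u. -/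
open Matrix Filter Topology BigOperators Finset

noncomputable section

/-!
On weight vectors, `E = S⁺`, `F = S⁻` and `H = Σᶻ` satisfy the relations of `U_q(sl₂)`: `E` and `F`
shift the weight by `±2`, and `EF - FE` acts on the weight-`μ` space as the scalar `[μ]`. For the
spin chain this is a site-by-site computation: `S_i⁺` and `S_j⁻` commute for `i ≠ j`, and the sum
of the diagonal terms `[S_i⁺, S_i⁻]` telescopes to `(q^{Σᶻ} - q^{-Σᶻ}) / (q - q⁻¹)`.

From these relations alone, for `y` of weight `μ`, induction on `j` with a q-Pascal rule gives
`E^j F^l y = ∑_t c_t F^{l-t} E^{j-t} y` with `c_t = [j]_t [l]_t [μ - l + j]_t / [t]!`, where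
`[K]_t = [K][K-1]⋯[K-t+1]`. Applied to `y = E^l u` this writes `F^k E^k F^l E^l u` as a
combination of the `F^r E^r u`, and the coefficients rearrange into the three q-binomials.
-/

theorem Generic.zpow_ne_one {q : ℂ} (hq : Generic q) {z : ℤ} (hz : z ≠ 0) : q ^ z ≠ 1 := by
  intro h
  rcases Int.natAbs_eq z with hz' | hz'
  · exact hq.2 z.natAbs (Int.natAbs_pos.2 hz) (by rwa [hz', zpow_natCast] at h)
  · exact hq.2 z.natAbs (Int.natAbs_pos.2 hz)
      (by rwa [hz', _root_.zpow_neg, inv_eq_one, zpow_natCast] at h)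

theorem Generic.sub_inv_ne_zero {q : ℂ} (hq : Generic q) : q - q⁻¹ ≠ 0 := by
  refine fun h => hq.zpow_ne_one (z := 2) two_ne_zero ?_
  rw [zpow_two]
  nth_rw 2 [sub_eq_zero.1 h]
  exact mul_inv_cancel₀ hq.1

theorem Generic.qNum_ne_zero {q : ℂ} (hq : Generic q) {m : ℤ} (hm : m ≠ 0) : qNum q m ≠ 0 := by
  refine div_ne_zero (fun h => hq.zpow_ne_one (mul_ne_zero two_ne_zero hm) ?_) hq.sub_inv_ne_zero
  rw [two_mul, zpow_add₀ hq.1]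
  nth_rw 2 [sub_eq_zero.1 h]
  rw [← zpow_add₀ hq.1, add_neg_cancel, zpow_zero]

theorem Generic.qFact_ne_zero {q : ℂ} (hq : Generic q) : ∀ t, qFact q t ≠ 0
  | 0 => one_ne_zero
  | t + 1 => mul_ne_zero (hq.qNum_ne_zero (by omega)) (hq.qFact_ne_zero t)

theorem qNum_zero (q : ℂ) : qNum q 0 = 0 := by simp [qNum]

theorem qNum_one {q : ℂ} (hq : q - q⁻¹ ≠ 0) : qNum q 1 = 1 := by
  simp [qNum, div_self hq]

theorem qNum_mul_qNum {q : ℂ} (hq : q ≠ 0) (a b s : ℤ) :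
    qNum q a * qNum q b = qNum q (a - s) * qNum q (b - s) + qNum q s * qNum q (a + b - s) := by
  simp only [qNum, div_mul_div_comm, ← add_div, neg_sub, zpow_sub₀ hq, zpow_add₀ hq,
    _root_.zpow_neg]
  congr 1
  have := zpow_ne_zero a hq
  have := zpow_ne_zero b hq
  have := zpow_ne_zero s hq
  field_simp
  ring

theorem qNum_one_mul (q : ℂ) (m : ℤ) : qNum q 1 * qNum q m = qNum q m := by
  by_cases h : q - q⁻¹ = 0
  · simp [qNum, h]
  · rw [qNum_one h, one_mul]

theorem qNum_succ_mul_sub {q : ℂ} (hq : q ≠ 0) (a b : ℤ) :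
    qNum q (a + 1) * qNum q b - qNum q a * qNum q (b + 1) = qNum q (b - a) := by
  rw [qNum_mul_qNum hq (a + 1) b a, show a + 1 - a = 1 by ring, show a + 1 + b - a = b + 1 by ring,
    qNum_one_mul]
  ring

def qDescFactorial (q : ℂ) (K : ℤ) (t : ℕ) : ℂ := ∏ s ∈ range t, qNum q (K - s)

theorem qDescFactorial_zero (q : ℂ) (K : ℤ) : qDescFactorial q K 0 = 1 := prod_range_zero _

theorem qDescFactorial_succ (q : ℂ) (K : ℤ) (t : ℕ) :
    qDescFactorial q K (t + 1) = qDescFactorial q K t * qNum q (K - t) :=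
  prod_range_succ _ t

theorem qDescFactorial_succ_succ (q : ℂ) (K : ℤ) (t : ℕ) :
    qDescFactorial q (K + 1) (t + 1) = qNum q (K + 1) * qDescFactorial q K t := by
  rw [qDescFactorial, prod_range_succ', mul_comm]
  push_cast
  simp_rw [sub_zero, add_sub_add_right_eq_sub, qDescFactorial]

theorem qDescFactorial_self_succ (q : ℂ) (j : ℕ) : qDescFactorial q j (j + 1) = 0 := by
  simp [qDescFactorial_succ, qNum_zero]

theorem qDescFactorial_mul_qFact (q : ℂ) {K t : ℕ} (h : t ≤ K) :
    qDescFactorial q K t * qFact q (K - t) = qFact q K := by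
  induction t with
  | zero => simp [qDescFactorial_zero]
  | succ t ih =>
    rw [← ih (by omega), qDescFactorial_succ, show K - t = K - (t + 1) + 1 by omega, qFact,
      mul_assoc]
    congr 3
    omega

theorem qBinom_natCast (q : ℂ) {K T : ℕ} (h : T ≤ K) :
    qBinom q K T = qFact q K / (qFact q T * qFact q (K - T)) := by
  rw [qBinom, if_pos ⟨by positivity, by exact_mod_cast h⟩, Int.toNat_natCast, Int.toNat_natCast,
    ← Nat.cast_sub h, Int.toNat_natCast]

def reorderCoeff (q : ℂ) (μ : ℤ) (j l t : ℕ) : ℂ :=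
  qDescFactorial q j t * qDescFactorial q l t * qDescFactorial q (μ - l + j) t / qFact q t

theorem reorderCoeff_zero_right (q : ℂ) (μ : ℤ) (j l : ℕ) : reorderCoeff q μ j l 0 = 1 := by
  simp [reorderCoeff, qDescFactorial_zero, qFact]

theorem reorderCoeff_self_succ (q : ℂ) (μ : ℤ) (j l : ℕ) : reorderCoeff q μ j l (j + 1) = 0 := by
  simp [reorderCoeff, qDescFactorial_self_succ]

theorem reorderCoeff_succ_succ {q : ℂ} (hq : Generic q) (μ : ℤ) (j l t : ℕ) :
    reorderCoeff q μ (j + 1) l (t + 1) = reorderCoeff q μ j l (t + 1) +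
      reorderCoeff q μ j l t * (qNum q (l - t) * qNum q (μ - l + 2 * j - t + 1)) := by
  have key : qNum q (j + 1) * qNum q (μ - l + j + 1) = qNum q (j - t) * qNum q (μ - l + j - t) +
      qNum q (t + 1) * qNum q (μ - l + 2 * j - t + 1) := by
    rw [qNum_mul_qNum hq.1 _ _ (t + 1)]
    congr 3 <;> ring
  have ht := hq.qNum_ne_zero (m := t + 1) (by omega)
  have hft := hq.qFact_ne_zero t
  simp only [reorderCoeff, qFact, Nat.cast_add, Nat.cast_one, ← add_assoc]
  rw [qDescFactorial_succ_succ, qDescFactorial_succ_succ, qDescFactorial_succ, qDescFactorial_succ,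
    qDescFactorial_succ]
  field_simp
  linear_combination (qDescFactorial q j t * qDescFactorial q l t * qDescFactorial q (μ - l + j) t *
    qNum q (l - t)) * key

theorem qFact_inv_sq_mul_reorderCoeff {q : ℂ} (hq : Generic q) {m k l i : ℕ} (hik : i ≤ k)
    (hkl : k ≤ l) :
    ((qFact q k) ^ 2)⁻¹ * ((qFact q l) ^ 2)⁻¹ * reorderCoeff q (m + 2 * l) k l (k - i) =
      qBinom q ((l : ℤ) + i) k * qBinom q ((l : ℤ) + i) l *
        qBinom q ((m : ℤ) + k + l) ((k : ℤ) - i) * ((qFact q (l + i)) ^ 2)⁻¹ := by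
  have hdesc : ∀ {K t : ℕ}, t ≤ K → qDescFactorial q K t = qFact q K / qFact q (K - t) :=
    fun h => eq_div_of_mul_eq (hq.qFact_ne_zero _) (qDescFactorial_mul_qFact q h)
  have hN : (m : ℤ) + 2 * l - l + k = ((m + k + l : ℕ) : ℤ) := by push_cast; ring
  rw [reorderCoeff, hN, hdesc (by omega), hdesc (by omega), hdesc (by omega),
    show ((l : ℤ) + i) = ((l + i : ℕ) : ℤ) by push_cast; ring,
    show ((m : ℤ) + k + l) = ((m + k + l : ℕ) : ℤ) by push_cast; ring,
    ← Nat.cast_sub hik, qBinom_natCast q (by omega), qBinom_natCast q (by omega),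
    qBinom_natCast q (by omega), show k - (k - i) = i by omega, show l + i - l = i by omega,
    show l - (k - i) = l + i - k by omega]
  have := hq.qFact_ne_zero (l + i)
  field_simp

theorem sum_range_smul_add_smul_succ {M : Type*} [AddCommGroup M] [Module ℂ M]
    (a b r : ℕ → ℂ) (X : ℕ → M) (j : ℕ) (h0 : b 0 = a 0)
    (hsucc : ∀ t, b (t + 1) = a (t + 1) + a t * r t) (hlast : a (j + 1) = 0) :
    ∑ t ∈ range (j + 1), a t • (X t + r t • X (t + 1)) = ∑ t ∈ range (j + 2), b t • X t := by
  have ha : ∑ t ∈ range (j + 1), a (t + 1) • X (t + 1) + a 0 • X 0 =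
      ∑ t ∈ range (j + 1), a t • X t := by
    rw [← sum_range_succ' (fun t => a t • X t), sum_range_succ, hlast, zero_smul, add_zero]
  rw [sum_range_succ' (fun t => b t • X t), h0]
  simp only [hsucc, add_smul, sum_add_distrib, smul_add, smul_smul]
  rw [← ha]
  abel

section UqSl2

variable {V : Type*} [AddCommGroup V] [Module ℂ V]

def dividedPowerProd (q : ℂ) (E F : Module.End ℂ V) (r : ℕ) : Module.End ℂ V :=
  ((qFact q r) ^ 2)⁻¹ • (F ^ r * E ^ r)

/-- With `K = q^H` acting as `q^μ` on the weight-`μ` space, `[E, F] = (K - K⁻¹) / (q - q⁻¹)`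
becomes the scalar `[μ]` there. -/
structure IsUqSl2Action (q : ℂ) (E F H : Module.End ℂ V) : Prop where
  mapsTo_E : ∀ (μ : ℤ), ∀ x ∈ H.eigenspace (μ : ℂ), E x ∈ H.eigenspace ((μ + 2 : ℤ) : ℂ)
  mapsTo_F : ∀ (μ : ℤ), ∀ x ∈ H.eigenspace (μ : ℂ), F x ∈ H.eigenspace ((μ - 2 : ℤ) : ℂ)
  commutator_apply : ∀ (μ : ℤ), ∀ x ∈ H.eigenspace (μ : ℂ), E (F x) - F (E x) = qNum q μ • x

namespace IsUqSl2Action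

variable {q : ℂ} {E F H : Module.End ℂ V}

theorem pow_E_mem (h : IsUqSl2Action q E F H) {μ : ℤ} {x : V} (hx : x ∈ H.eigenspace (μ : ℂ))
    (b : ℕ) : (E ^ b) x ∈ H.eigenspace ((μ + 2 * b : ℤ) : ℂ) := by
  induction b with
  | zero => simpa using hx
  | succ b ih =>
    rw [pow_succ', Module.End.mul_apply]
    convert h.mapsTo_E _ _ ih using 3
    push_cast
    ring

theorem pow_F_mem (h : IsUqSl2Action q E F H) {μ : ℤ} {x : V} (hx : x ∈ H.eigenspace (μ : ℂ))
    (a : ℕ) : (F ^ a) x ∈ H.eigenspace ((μ - 2 * a : ℤ) : ℂ) := by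
  induction a with
  | zero => simpa using hx
  | succ a ih =>
    rw [pow_succ', Module.End.mul_apply]
    convert h.mapsTo_F _ _ ih using 3
    push_cast
    ring

theorem E_pow_succ_F_apply (h : IsUqSl2Action q E F H) (hq : q ≠ 0) {μ : ℤ} {x : V}
    (hx : x ∈ H.eigenspace (μ : ℂ)) (a : ℕ) :
    E ((F ^ (a + 1)) x) = (F ^ (a + 1)) (E x) + (qNum q (a + 1) * qNum q (μ - a)) • (F ^ a) x := by
  induction a with
  | zero => simpa [qNum_one_mul, sub_eq_iff_eq_add'] using h.commutator_apply μ x hx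
  | succ a ih =>
    have hcomm := sub_eq_iff_eq_add'.1 (h.commutator_apply _ _ (h.pow_F_mem hx (a + 1)))
    have hq' := qNum_succ_mul_sub hq (a + 1) (μ - a - 1)
    rw [show μ - a - 1 + 1 = μ - a by ring,
      show μ - a - 1 - (a + 1) = μ - 2 * (a + 1) by ring] at hq'
    have hF : ∀ (b : ℕ) (y : V), F ((F ^ b) y) = (F ^ (b + 1)) y := fun b y => by
      rw [pow_succ', Module.End.mul_apply]
    rw [← hF, hcomm, ih, map_add, map_smul, hF, hF, add_assoc, ← add_smul]
    push_cast
    rw [show μ - (a + 1) = μ - a - 1 by ring]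
    congr 2
    linear_combination -hq'

theorem E_pow_F_apply (h : IsUqSl2Action q E F H) (hq : q ≠ 0) {μ : ℤ} {x : V}
    (hx : x ∈ H.eigenspace (μ : ℂ)) (a : ℕ) :
    E ((F ^ a) x) = (F ^ a) (E x) + (qNum q a * qNum q (μ - a + 1)) • (F ^ (a - 1)) x := by
  cases a with
  | zero => simp [qNum_zero]
  | succ a =>
    rw [h.E_pow_succ_F_apply hq hx a]
    push_cast
    rw [show μ - (a + 1) + 1 = μ - a by ring]

theorem pow_E_pow_F_apply (h : IsUqSl2Action q E F H) (hq : Generic q) {μ : ℤ} {y : V}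
    (hy : y ∈ H.eigenspace (μ : ℂ)) {j l : ℕ} (hjl : j ≤ l) :
    (E ^ j) ((F ^ l) y) =
      ∑ t ∈ range (j + 1), reorderCoeff q μ j l t • (F ^ (l - t)) ((E ^ (j - t)) y) := by
  induction j with
  | zero => simp [reorderCoeff_zero_right]
  | succ j ih =>
    set X : ℕ → V := fun t => (F ^ (l - t)) ((E ^ (j + 1 - t)) y)
    have hterm : ∀ t ∈ range (j + 1), E (reorderCoeff q μ j l t • (F ^ (l - t)) ((E ^ (j - t)) y)) =
        reorderCoeff q μ j l t •
          (X t + (qNum q (l - t) * qNum q (μ - l + 2 * j - t + 1)) • X (t + 1)) := by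
      intro t ht
      have htj : t ≤ j := Nat.lt_succ_iff.1 (mem_range.1 ht)
      rw [map_smul, h.E_pow_F_apply hq.1 (h.pow_E_mem hy (j - t)) (l - t), ← Module.End.mul_apply E,
        ← pow_succ', Nat.cast_sub (by omega : t ≤ l), Nat.cast_sub htj]
      simp only [X, Nat.sub_add_comm htj, Nat.add_sub_add_right, Nat.sub_sub]
      congr 5
      ring
    rw [pow_succ', Module.End.mul_apply, ih (by omega), map_sum, sum_congr rfl hterm,
      sum_range_smul_add_smul_succ _ _ _ X j (by simp only [reorderCoeff_zero_right])
        (reorderCoeff_succ_succ hq μ j l) (reorderCoeff_self_succ q μ j l)]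

theorem pow_F_pow_E_pow_F_pow_E_apply (h : IsUqSl2Action q E F H) (hq : Generic q) {μ : ℤ}
    {u : V} (hu : u ∈ H.eigenspace (μ : ℂ)) {k l : ℕ} (hkl : k ≤ l) :
    (F ^ k) ((E ^ k) ((F ^ l) ((E ^ l) u))) = ∑ t ∈ range (k + 1),
      reorderCoeff q (μ + 2 * l) k l t • (F ^ (l + (k - t))) ((E ^ (l + (k - t))) u) := by
  rw [h.pow_E_pow_F_apply hq (h.pow_E_mem hu l) hkl, map_sum]
  refine sum_congr rfl fun t ht => ?_
  have htk : t ≤ k := Nat.lt_succ_iff.1 (mem_range.1 ht)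
  rw [map_smul, ← Module.End.mul_apply, ← Module.End.mul_apply (E ^ (k - t)), ← pow_add, ← pow_add,
    show k + (l - t) = l + (k - t) by omega, add_comm (k - t)]

theorem dividedPowerProd_mul_apply (h : IsUqSl2Action q E F H) (hq : Generic q) {m : ℕ}
    {u : V} (hu : u ∈ H.eigenspace ((m : ℤ) : ℂ)) {k l : ℕ} (hkl : k ≤ l) :
    dividedPowerProd q E F k (dividedPowerProd q E F l u) =
      ∑ i ∈ range (k + 1), (qBinom q ((l : ℤ) + i) k * qBinom q ((l : ℤ) + i) l *
        qBinom q ((m : ℤ) + k + l) ((k : ℤ) - i)) • dividedPowerProd q E F (l + i) u := by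
  simp only [dividedPowerProd, LinearMap.smul_apply, Module.End.mul_apply, map_smul,
    h.pow_F_pow_E_pow_F_pow_E_apply hq hu hkl, smul_sum, smul_smul]
  rw [← sum_range_reflect]
  refine sum_congr rfl fun i hi => ?_
  have hik : i ≤ k := Nat.lt_succ_iff.1 (mem_range.1 hi)
  rw [show k + 1 - 1 - i = k - i by omega, show k - (k - i) = i by omega,
    ← qFact_inv_sq_mul_reorderCoeff hq hik hkl]
  congr 1
  ring

end IsUqSl2Action

end UqSl2

section TensorOp

variable {ι α R : Type*} [Fintype ι] [CommRing R]

def tensorOp (A : ι → Matrix α α R) : Matrix (ι → α) (ι → α) R := fun x y => ∏ k, A k (x k) (y k)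

theorem tensorOp_mul [DecidableEq ι] [Fintype α] (A B : ι → Matrix α α R) :
    tensorOp A * tensorOp B = tensorOp (A * B) := by
  ext x y
  simp only [tensorOp, mul_apply, Pi.mul_apply, Fintype.prod_sum, prod_mul_distrib]

theorem tensorOp_diagonal [DecidableEq α] (d : ι → α → R) :
    tensorOp (fun k => diagonal (d k)) = diagonal fun x => ∏ k, d k (x k) := by
  ext x y
  by_cases h : x = y
  · subst h
    simp [tensorOp]
  · obtain ⟨k, hk⟩ := Function.ne_iff.1 h
    rw [diagonal_apply_ne _ h]
    exact prod_eq_zero (mem_univ k) (diagonal_apply_ne _ hk)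

theorem tensorOp_sub_of_eq_off [DecidableEq ι] (A B C : ι → Matrix α α R) (i : ι)
    (hi : A i - B i = C i) (hA : ∀ k ≠ i, A k = C k) (hB : ∀ k ≠ i, B k = C k) :
    tensorOp A - tensorOp B = tensorOp C := by
  ext x y
  have hA' : ∏ k ∈ {i}ᶜ, A k (x k) (y k) = ∏ k ∈ {i}ᶜ, C k (x k) (y k) :=
    prod_congr rfl fun k hk => by rw [hA k (by simpa using hk)]
  have hB' : ∏ k ∈ {i}ᶜ, B k (x k) (y k) = ∏ k ∈ {i}ᶜ, C k (x k) (y k) :=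
    prod_congr rfl fun k hk => by rw [hB k (by simpa using hk)]
  simp only [tensorOp, Matrix.sub_apply, Fintype.prod_eq_mul_prod_compl i, hA', hB', ← hi, sub_mul]

theorem tensorOp_eq_of_eq_off_pair [DecidableEq ι] (A B : ι → Matrix α α R) {i j : ι}
    (hij : i ≠ j) (hpair : ∀ a b a' b', A i a b * A j a' b' = B i a b * B j a' b')
    (hoff : ∀ k, k ≠ i → k ≠ j → A k = B k) : tensorOp A = tensorOp B := by
  ext x y
  have hj : j ∈ univ.erase i := mem_erase.2 ⟨hij.symm, mem_univ j⟩
  simp only [tensorOp]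
  rw [← mul_prod_erase univ _ (mem_univ i), ← mul_prod_erase _ _ hj,
    ← mul_prod_erase univ (fun k => B k (x k) (y k)) (mem_univ i),
    ← mul_prod_erase _ (fun k => B k (x k) (y k)) hj, ← mul_assoc, ← mul_assoc, hpair]
  congr 1
  exact prod_congr rfl fun k hk =>
    by rw [hoff k (ne_of_mem_erase (mem_of_mem_erase hk)) (ne_of_mem_erase hk)]

end TensorOp

section SiteFamily

variable {n : ℕ} {β : Type*}

def siteFamily (i : Fin n) (p a q : β) (k : Fin n) : β :=
  if k < i then p else if k = i then a else q

theorem siteFamily_self (i : Fin n) (p a q : β) : siteFamily i p a q i = a := by simp [siteFamily]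

theorem siteFamily_of_lt {i k : Fin n} (h : k < i) (p a q : β) : siteFamily i p a q k = p :=
  if_pos h

theorem siteFamily_of_gt {i k : Fin n} (h : i < k) (p a q : β) : siteFamily i p a q k = q := by
  simp [siteFamily, h.not_gt, h.ne']

theorem apply_siteFamily {γ : Type*} (f : β → γ) (i : Fin n) (p a q : β) (k : Fin n) :
    f (siteFamily i p a q k) = siteFamily i (f p) (f a) (f q) k := by
  simp only [siteFamily, apply_ite f]

theorem siteFamily_mul [Mul β] (i : Fin n) (p a q p' a' q' : β) :
    siteFamily i p a q * siteFamily i p' a' q' = siteFamily i (p * p') (a * a') (q * q') := by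
  funext k
  simp only [Pi.mul_apply, siteFamily]
  split_ifs <;> rfl

theorem prod_siteFamily {R : Type*} [CommMonoid R] (i : Fin n) (a b c : Fin n → R) :
    ∏ k, siteFamily i (a k) (c k) (b k) k =
      c i * (∏ k with k < i, a k) * ∏ k with i < k, b k := by
  simp only [siteFamily]
  rw [Fintype.prod_eq_mul_prod_compl i, if_neg (lt_irrefl i), if_pos rfl, mul_assoc,
    prod_congr rfl fun k hk => by rw [if_neg (by simpa using hk : k ≠ i)], prod_ite]
  congr 2
  · refine prod_congr (Finset.ext fun k => ?_) fun _ _ => rfl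
    simp only [mem_filter, mem_compl, mem_singleton, mem_univ, true_and]
    exact ⟨fun h => h.2, fun h => ⟨h.ne, h⟩⟩
  · refine prod_congr (Finset.ext fun k => ?_) fun _ _ => rfl
    simp only [mem_filter, mem_compl, mem_singleton, mem_univ, true_and]
    exact ⟨fun h => lt_of_le_of_ne (not_lt.1 h.2) (Ne.symm h.1), fun h => ⟨h.ne', h.not_gt⟩⟩

end SiteFamily

theorem zpow_sum₀ {q : ℂ} (hq : q ≠ 0) {ι : Type*} (s : Finset ι) (f : ι → ℤ) :
    q ^ (∑ i ∈ s, f i) = ∏ i ∈ s, q ^ f i := by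
  classical
  induction s using Finset.induction_on with
  | empty => simp
  | insert a s ha ih => rw [sum_insert ha, prod_insert ha, zpow_add₀ hq, ih]

section SpinChain

variable {n : ℕ}

def spinSign (a : Fin 2) : ℤ := if a = 0 then 1 else -1

def spinWeight (x : Spins n) : ℤ := ∑ k, spinSign (x k)

theorem SzOp_eq_diagonal (n : ℕ) : SzOp n = diagonal fun x => (spinWeight x : ℂ) := by
  ext x y
  simp only [SzOp, diagonal_apply, spinWeight, spinSign, Int.cast_sum,
    apply_ite (Int.cast : ℤ → ℂ), Int.cast_one, Int.cast_neg]

abbrev weightSpace (n : ℕ) (μ : ℤ) : Submodule ℂ (Spins n → ℂ) :=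
  Module.End.eigenspace (toLinAlgEquiv' (SzOp n)) μ

theorem mem_weightSpace_iff {μ : ℤ} {u : Spins n → ℂ} :
    u ∈ weightSpace n μ ↔ ∀ x, u x ≠ 0 → spinWeight x = μ := by
  simp only [Module.End.mem_eigenspace_iff, toLinAlgEquiv'_apply, SzOp_eq_diagonal,
    mulVec_diagonal, funext_iff, Pi.smul_apply, smul_eq_mul, mul_eq_mul_right_iff, Int.cast_inj]
  exact forall_congr' fun x => or_iff_not_imp_right

def ShiftsWeight (M : Matrix (Spins n) (Spins n) ℂ) (d : ℤ) : Prop :=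
  ∀ x y, M x y ≠ 0 → spinWeight x = spinWeight y + d

theorem ShiftsWeight.mem_weightSpace {M : Matrix (Spins n) (Spins n) ℂ} {d : ℤ}
    (hM : ShiftsWeight M d) {μ : ℤ} {u : Spins n → ℂ} (hu : u ∈ weightSpace n μ) :
    toLinAlgEquiv' M u ∈ weightSpace n (μ + d) := by
  rw [mem_weightSpace_iff] at hu ⊢
  intro x hx
  obtain ⟨y, -, hy⟩ := exists_ne_zero_of_sum_ne_zero hx
  rw [hM x y (left_ne_zero_of_mul hy), hu y (right_ne_zero_of_mul hy), add_comm]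

theorem ShiftsWeight.sum {ι : Type*} (s : Finset ι) {M : ι → Matrix (Spins n) (Spins n) ℂ}
    {d : ℤ} (h : ∀ i ∈ s, ShiftsWeight (M i) d) : ShiftsWeight (∑ i ∈ s, M i) d := fun x y hxy => by
  rw [Matrix.sum_apply] at hxy
  obtain ⟨i, hi, hne⟩ := exists_ne_zero_of_sum_ne_zero hxy
  exact h i hi x y hne

theorem siteOp_apply_ne_zero {v : ℂ} {A : Matrix (Fin 2) (Fin 2) ℂ} {i : Fin n} {x y : Spins n}
    (h : siteOp n v A i x y ≠ 0) : (∀ k ≠ i, x k = y k) ∧ A (x i) (y i) ≠ 0 := by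
  rw [siteOp, prod_ne_zero_iff] at h
  refine ⟨fun k hk => ?_, by simpa using h i (mem_univ i)⟩
  have := h k (mem_univ k)
  split_ifs at this <;> tauto

theorem spinWeight_eq_of_eq_off {i : Fin n} {x y : Spins n} (h : ∀ k ≠ i, x k = y k) :
    spinWeight x = spinWeight y + (spinSign (x i) - spinSign (y i)) := by
  rw [spinWeight, spinWeight, ← sum_erase_add _ _ (mem_univ i), ← sum_erase_add _ _ (mem_univ i),
    sum_congr rfl fun k hk => by rw [h k (ne_of_mem_erase hk)]]
  ring

theorem shiftsWeight_siteOp (v : ℂ) {A : Matrix (Fin 2) (Fin 2) ℂ} {d : ℤ}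
    (hA : ∀ a b, A a b ≠ 0 → spinSign a = spinSign b + d) (i : Fin n) :
    ShiftsWeight (siteOp n v A i) d := fun x y hxy => by
  obtain ⟨hoff, hi⟩ := siteOp_apply_ne_zero hxy
  rw [spinWeight_eq_of_eq_off hoff, hA _ _ hi]
  ring

theorem shiftsWeight_SpOp (v : ℂ) : ShiftsWeight (SpOp n v) 2 :=
  ShiftsWeight.sum _ fun i _ => shiftsWeight_siteOp v (fun a b => by
    fin_cases a <;> fin_cases b <;> simp [sigmaP, spinSign]) i

theorem shiftsWeight_SmOp (v : ℂ) : ShiftsWeight (SmOp n v) (-2) :=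
  ShiftsWeight.sum _ fun i _ => shiftsWeight_siteOp v (fun a b => by
    fin_cases a <;> fin_cases b <;> simp [sigmaM, spinSign]) i

theorem siteOp_eq_tensorOp (v : ℂ) (A : Matrix (Fin 2) (Fin 2) ℂ) (i : Fin n) :
    siteOp n v A i = tensorOp (siteFamily i (diagonal (Kdiag v)) A (diagonal (Kdiag v⁻¹))) := by
  ext x y
  refine prod_congr rfl fun k _ => ?_
  simp only [siteFamily]
  split_ifs <;> simp_all

theorem siteOp_sigmaP_mul_siteOp_sigmaM_comm {v : ℂ} (hv : v ≠ 0) {i j : Fin n} (hij : i ≠ j) :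
    siteOp n v sigmaP i * siteOp n v sigmaM j = siteOp n v sigmaM j * siteOp n v sigmaP i := by
  simp only [siteOp_eq_tensorOp, tensorOp_mul]
  refine tensorOp_eq_of_eq_off_pair _ _ hij (fun a b a' b' => ?_) (fun k hki hkj => ?_)
  · rcases hij.lt_or_gt with h | h <;>
    simp only [Pi.mul_apply, siteFamily_self, siteFamily_of_lt h, siteFamily_of_gt h] <;>
    fin_cases a <;> fin_cases b <;> fin_cases a' <;> fin_cases b' <;>
    simp [mul_apply, sigmaP, sigmaM, Kdiag, hv]
  · simp only [Pi.mul_apply, siteFamily]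
    split_ifs <;> simp_all [diagonal_mul_diagonal, mul_comm]

theorem sigmaP_mul_sigmaM_sub :
    sigmaP * sigmaM - sigmaM * sigmaP = diagonal fun a => (spinSign a : ℂ) := by
  ext a b
  fin_cases a <;> fin_cases b <;> simp [mul_apply, sigmaP, sigmaM, spinSign]

theorem Kdiag_mul_self (v : ℂ) (a : Fin 2) : Kdiag v a * Kdiag v a = (v ^ 2) ^ spinSign a := by
  fin_cases a <;> simp [Kdiag, spinSign, sq]

theorem siteOp_sigmaP_mul_siteOp_sigmaM_sub (v : ℂ) (i : Fin n) :
    siteOp n v sigmaP i * siteOp n v sigmaM i - siteOp n v sigmaM i * siteOp n v sigmaP i =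
      diagonal fun x => (spinSign (x i) : ℂ) * (∏ k with k < i, (v ^ 2) ^ spinSign (x k)) *
        ∏ k with i < k, (v ^ 2) ^ (-spinSign (x k)) := by
  simp only [siteOp_eq_tensorOp, tensorOp_mul, siteFamily_mul, diagonal_mul_diagonal]
  rw [tensorOp_sub_of_eq_off _ _ (fun k => diagonal (siteFamily i (fun a => (v ^ 2) ^ spinSign a)
    (fun a => (spinSign a : ℂ)) (fun a => (v ^ 2) ^ (-spinSign a)) k)) i ?_ ?_ ?_,
    tensorOp_diagonal]
  · congr 1
    funext x
    refine (prod_congr rfl fun k _ =>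
      apply_siteFamily (fun f : Fin 2 → ℂ => f (x k)) i _ _ _ k).trans ?_
    exact
      (prod_siteFamily i (fun k => (v ^ 2) ^ spinSign (x k)) (fun k => (v ^ 2) ^ (-spinSign (x k)))
        fun k => (spinSign (x k) : ℂ))
  · rw [siteFamily_self, siteFamily_self, siteFamily_self, sigmaP_mul_sigmaM_sub]
  all_goals
    intro k hk
    simp only [siteFamily, if_neg hk, apply_ite diagonal, Kdiag_mul_self, inv_pow, _root_.inv_zpow']

theorem sub_inv_mul_sum_spinSign_mul_prod {q : ℂ} (hq : q ≠ 0) (x : Spins n) :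
    (q - q⁻¹) * ∑ i, (spinSign (x i) : ℂ) * (∏ k with k < i, q ^ spinSign (x k)) *
        ∏ k with i < k, q ^ (-spinSign (x k)) = q ^ spinWeight x - q ^ (-spinWeight x) := by
  have hsign : ∀ a, q ^ (-spinSign a) + (q - q⁻¹) * spinSign a = q ^ spinSign a := by
    intro a
    fin_cases a <;> simp [spinSign]
  -- `prod_add_ordered` with `f = q^{-s}` and `f + g = q^{s}` is the telescoping identity.
  have h := prod_add_ordered univ (fun k => q ^ (-spinSign (x k)))
    fun k => (q - q⁻¹) * spinSign (x k)
  simp only [hsign] at h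
  rw [spinWeight, ← sum_neg_distrib, zpow_sum₀ hq, zpow_sum₀ hq, h, add_sub_cancel_left, mul_sum]
  exact sum_congr rfl fun i _ => by ring

theorem SpOp_mul_SmOp_sub {v : ℂ} (hv : v ≠ 0) (hq : v ^ 2 - (v ^ 2)⁻¹ ≠ 0) :
    SpOp n v * SmOp n v - SmOp n v * SpOp n v = diagonal fun x => qNum (v ^ 2) (spinWeight x) := by
  have hsum : SpOp n v * SmOp n v - SmOp n v * SpOp n v =
      ∑ i, (siteOp n v sigmaP i * siteOp n v sigmaM i -
        siteOp n v sigmaM i * siteOp n v sigmaP i) := by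
    rw [SpOp, SmOp, sum_mul_sum, sum_mul_sum, sum_comm (f := fun i j => siteOp n v sigmaM i * _),
      ← sum_sub_distrib]
    refine sum_congr rfl fun i _ => ?_
    rw [← sum_sub_distrib]
    refine sum_eq_single i (fun j _ hji => ?_) (by simp)
    rw [siteOp_sigmaP_mul_siteOp_sigmaM_comm hv hji.symm, sub_self]
  ext x y
  rw [hsum, Matrix.sum_apply]
  simp only [siteOp_sigmaP_mul_siteOp_sigmaM_sub, diagonal_apply]
  split_ifs
  · rw [qNum, eq_div_iff hq, mul_comm, ← sub_inv_mul_sum_spinSign_mul_prod (pow_ne_zero 2 hv)]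
  · simp

theorem toLinAlgEquiv'_diagonal_spinWeight_apply (g : ℤ → ℂ) {μ : ℤ} {u : Spins n → ℂ}
    (hu : u ∈ weightSpace n μ) :
    toLinAlgEquiv' (diagonal fun x => g (spinWeight x)) u = g μ • u := by
  rw [mem_weightSpace_iff] at hu
  funext x
  rw [toLinAlgEquiv'_apply, mulVec_diagonal, Pi.smul_apply, smul_eq_mul]
  by_cases hx : u x = 0
  · simp [hx]
  · rw [hu x hx]

theorem isUqSl2Action_spinChain {v : ℂ} (hq : Generic (v ^ 2)) :
    IsUqSl2Action (v ^ 2) (toLinAlgEquiv' (SpOp n v)) (toLinAlgEquiv' (SmOp n v))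
      (toLinAlgEquiv' (SzOp n)) where
  mapsTo_E _ _ hx := (shiftsWeight_SpOp v).mem_weightSpace hx
  mapsTo_F _ _ hx := by simpa only [sub_eq_add_neg] using (shiftsWeight_SmOp v).mem_weightSpace hx
  commutator_apply μ x hx := by
    have hv : v ≠ 0 := (pow_ne_zero_iff two_ne_zero).1 hq.1
    rw [← Module.End.mul_apply, ← Module.End.mul_apply, ← LinearMap.sub_apply, ← map_mul,
      ← map_mul, ← map_sub, SpOp_mul_SmOp_sub hv hq.sub_inv_ne_zero,
      toLinAlgEquiv'_diagonal_spinWeight_apply _ hx]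

theorem toLinAlgEquiv'_SOp (n : ℕ) (v : ℂ) (r : ℕ) :
    toLinAlgEquiv' (SOp n v r) =
      dividedPowerProd (v ^ 2) (toLinAlgEquiv' (SpOp n v)) (toLinAlgEquiv' (SmOp n v)) r := by
  simp only [SOp, dividedPowerProd, map_smul, map_mul, map_pow]

end SpinChain

theorem stmt5_general (n : ℕ) (v : ℂ) (hgen : Generic (v ^ 2))
    (k l : ℕ) (hkl : k ≤ l) (M2 : ℤ) (hM : 0 ≤ M2)
    (u : Spins n → ℂ) (hu : (SzOp n).mulVec u = (M2 : ℂ) • u) :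
    (SOp n v k).mulVec ((SOp n v l).mulVec u) =
      ∑ i ∈ Finset.range (k + 1),
        (qBinom (v ^ 2) ((l : ℤ) + i) k * qBinom (v ^ 2) ((l : ℤ) + i) l *
            qBinom (v ^ 2) (M2 + k + l) ((k : ℤ) - i)) •
          (SOp n v (l + i)).mulVec u := by
  lift M2 to ℕ using hM
  have hu' : u ∈ weightSpace n M2 := by
    rwa [Module.End.mem_eigenspace_iff, toLinAlgEquiv'_apply]
  simp only [← toLinAlgEquiv'_apply, toLinAlgEquiv'_SOp]
  exact (isUqSl2Action_spinChain hgen).dividedPowerProd_mul_apply hgen hu' hkl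

/-- for `q = v²` generic, `0 ≤ k ≤ l`, `m ≥ 0` a half-integer (`M2 = 2m`)
and `u` in the weight space `W_m` (eigenvector of `Σ^z` with eigenvalue `2m`),
`S_k S_l u = Σ_{i=0}^{k} [l+i choose k][l+i choose l][2m+k+l choose k−i] S_{l+i} u`. -/
theorem stmt5 (n : ℕ) (hn : 1 ≤ n) (v : ℂ) (hv : v ≠ 0) (hgen : Generic (v ^ 2))
    (k l : ℕ) (hkl : k ≤ l) (M2 : ℤ) (hM : 0 ≤ M2)
    (u : Spins n → ℂ) (hu : (SzOp n).mulVec u = (M2 : ℂ) • u) :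
    (SOp n v k).mulVec ((SOp n v l).mulVec u) =
      ∑ i ∈ Finset.range (k + 1),
        (qBinom (v ^ 2) ((l : ℤ) + i) k * qBinom (v ^ 2) ((l : ℤ) + i) l *
            qBinom (v ^ 2) (M2 + k + l) ((k : ℤ) - i)) •
          (SOp n v (l + i)).mulVec u :=
  stmt5_general n v hgen k l hkl M2 hM u hu

end
end

section
/- Let q be generic and let J ≥ 0, k ≥ 1 and l be integers with 0 ≤ l < k. Then Σ_{r=0}^{l} (−1)^r [J+k+r]! / ([r]! [J+r+1]! [k−r]!) = (−1)^l [J+k+l+1]! / ([J+l+1]! [k−l−1]! [l]! [J+k+1] [k]). (Here J plays the role of 2j in the paper.) -/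
/-! Induction on `l`: consecutive closed forms differ by the next summand. After cancelling the
common factor `[J+k+l+1]! / ([J+l+2]! [k-l-1]! [l+1]!)` this is the identity
`[J+k+1][k] - [J+l+2][l+1] = [k-l-1][J+k+l+2]`, an instance of
`[a][b] - [a-c][b-c] = [c][a+b-c]`. -/

open Matrix Filter Topology BigOperators Finset

noncomputable section

theorem qFact_succ (q : ℂ) (n : ℕ) : qFact q (n + 1) = qNum q ((n : ℤ) + 1) * qFact q n := rfl

theorem qNum_mul_sub_qNum_mul {q : ℂ} (hq : q ≠ 0) (a b c : ℤ) :
    qNum q a * qNum q b - qNum q (a - c) * qNum q (b - c) = qNum q c * qNum q (a + b - c) := by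
  simp only [qNum, div_mul_div_comm, div_sub_div_same, neg_sub, zpow_add₀ hq,
    zpow_sub₀ hq, _root_.zpow_neg]
  have := zpow_ne_zero a hq
  have := zpow_ne_zero b hq
  have := zpow_ne_zero c hq
  field_simp
  ring

namespace Generic

variable {q : ℂ}

theorem sub_inv_ne_zero_s10 (hq : Generic q) : q - q⁻¹ ≠ 0 := by
  refine sub_ne_zero.mpr fun h => hq.2 2 two_pos ?_
  rw [sq]
  nth_rw 2 [h]
  exact mul_inv_cancel₀ hq.1

theorem qNum_ne_zero_s10 (hq : Generic q) {n : ℤ} (hn : 0 < n) : qNum q n ≠ 0 := by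
  refine div_ne_zero (sub_ne_zero.mpr fun h => ?_) hq.sub_inv_ne_zero_s10
  lift n to ℕ using hn.le
  rw [_root_.zpow_neg, zpow_natCast] at h
  apply hq.2 (2 * n) (by omega)
  rw [mul_comm, pow_mul, sq]
  nth_rw 2 [h]
  exact mul_inv_cancel₀ (pow_ne_zero n hq.1)

theorem qFact_ne_zero_s10 (hq : Generic q) (n : ℕ) : qFact q n ≠ 0 := by
  induction n with
  | zero => exact one_ne_zero
  | succ n ih => exact mul_ne_zero (hq.qNum_ne_zero_s10 (by positivity)) ih

end Generic

def altSumTerm (q : ℂ) (J k r : ℕ) : ℂ :=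
  qFact q (J + k + r) / (qFact q r * qFact q (J + r + 1) * qFact q (k - r))

def altSumClosedForm (q : ℂ) (J k l : ℕ) : ℂ :=
  qFact q (J + k + l + 1) /
    (qFact q (J + l + 1) * qFact q (k - l - 1) * qFact q l * qNum q ((J : ℤ) + k + 1) *
      qNum q (k : ℤ))

section

variable {q : ℂ} (hq : Generic q) (J : ℕ) {k : ℕ}
include hq

theorem altSumTerm_zero (hk : 0 < k) : altSumTerm q J k 0 = altSumClosedForm q J k 0 := by
  obtain ⟨m, rfl⟩ : ∃ m, k = m + 1 := ⟨k - 1, by omega⟩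
  simp only [altSumTerm, altSumClosedForm, add_zero, Nat.sub_zero, Nat.add_sub_cancel]
  rw [qFact_succ q (J + (m + 1)), qFact_succ q m]
  have := hq.qFact_ne_zero_s10
  have h₁ := hq.qNum_ne_zero_s10 (n := J + (m + 1 : ℕ) + 1) (by omega)
  have h₂ := hq.qNum_ne_zero_s10 (n := (m : ℤ) + 1) (by omega)
  push_cast at *
  field_simp

theorem altSumClosedForm_sub_altSumTerm_succ {l : ℕ} (h : l + 1 < k) :
    altSumClosedForm q J k l - altSumTerm q J k (l + 1) = -altSumClosedForm q J k (l + 1) := by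
  unfold altSumClosedForm altSumTerm
  obtain ⟨m, rfl⟩ : ∃ m, k = l + m + 2 := ⟨k - l - 2, by omega⟩
  set N := J + l + m + 2 + l
  rw [show J + (l + m + 2) + l + 1 = N + 1 by omega, show J + (l + m + 2) + (l + 1) = N + 1 by omega,
    show l + m + 2 - l - 1 = m + 1 by omega,
    show l + m + 2 - (l + 1) = m + 1 by omega, Nat.add_sub_cancel,
    show J + (l + 1) + 1 = J + l + 1 + 1 by omega, qFact_succ q (N + 1), qFact_succ q m, qFact_succ q l,
    qFact_succ q (J + l + 1)]
  have key : qNum q (J + (l + m + 2 : ℕ) + 1) * qNum q (l + m + 2 : ℕ) -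
      qNum q ((J : ℤ) + l + 1 + 1) * qNum q ((l : ℤ) + 1) =
      qNum q ((m : ℤ) + 1) * qNum q ((N : ℤ) + 1 + 1) := by
    convert qNum_mul_sub_qNum_mul hq.1 (J + (l + m + 2 : ℕ) + 1) (l + m + 2 : ℕ) (m + 1) using 4 <;>
      push_cast [N] <;> ring
  have := hq.qFact_ne_zero_s10
  have h₁ := hq.qNum_ne_zero_s10 (n := J + (l + m + 2 : ℕ) + 1) (by omega)
  have h₂ := hq.qNum_ne_zero_s10 (n := (l + m + 2 : ℕ)) (by omega)
  have h₃ := hq.qNum_ne_zero_s10 (n := (J : ℤ) + l + 1 + 1) (by omega)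
  have h₄ := hq.qNum_ne_zero_s10 (n := (l : ℤ) + 1) (by omega)
  have h₅ := hq.qNum_ne_zero_s10 (n := (m : ℤ) + 1) (by omega)
  push_cast at *
  field_simp
  linear_combination -qFact q (N + 1) / (qFact q (J + l + 1) * qFact q m * qFact q l) * key

theorem sum_altSumTerm {l : ℕ} (hl : l < k) :
    ∑ r ∈ range (l + 1), (-1 : ℂ) ^ r * altSumTerm q J k r = (-1) ^ l * altSumClosedForm q J k l := by
  induction l with
  | zero => simpa using altSumTerm_zero hq J hl
  | succ l ih =>
    rw [sum_range_succ, ih (by omega), pow_succ]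
    linear_combination (-1 : ℂ) ^ l * altSumClosedForm_sub_altSumTerm_succ hq J hl

end

theorem stmt10_general (q : ℂ) (hq : Generic q) (J k l : ℕ) (hl : l < k) :
    ∑ r ∈ Finset.range (l + 1),
      (-1 : ℂ) ^ r * (qFact q (J + k + r) / (qFact q r * qFact q (J + r + 1) * qFact q (k - r))) =
    (-1 : ℂ) ^ l * (qFact q (J + k + l + 1) /
      (qFact q (J + l + 1) * qFact q (k - l - 1) * qFact q l *
        qNum q ((J : ℤ) + k + 1) * qNum q (k : ℤ))) :=
  sum_altSumTerm hq J hl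

/-- for generic `q` and `0 ≤ l < k` (here `J = 2j`),
`Σ_{r=0}^{l} (−1)^r [J+k+r]!/([r]![J+r+1]![k−r]!)
  = (−1)^l [J+k+l+1]!/([J+l+1]![k−l−1]![l]![J+k+1][k])`. -/
theorem stmt10 (q : ℂ) (hq : Generic q) (J k l : ℕ) (hk : 1 ≤ k) (hl : l < k) :
    ∑ r ∈ Finset.range (l + 1),
      (-1 : ℂ) ^ r * (qFact q (J + k + r) / (qFact q r * qFact q (J + r + 1) * qFact q (k - r))) =
    (-1 : ℂ) ^ l * (qFact q (J + k + l + 1) /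
      (qFact q (J + l + 1) * qFact q (k - l - 1) * qFact q l *
        qNum q ((J : ℤ) + k + 1) * qNum q (k : ℤ))) :=
  stmt10_general q hq J k l hl
end
end
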